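/- arXiv:1207.1659 — 2 statements merged into one kernel-verified Lean document; each statement's English description precedes it below -/
import Mathlib

section
/- The upshifted likelihood-ratio order is preserved under convolution: if m¹ ≤_{lr↑} m² and n¹ ≤_{lr↑} n² are finitely supported probability distributions on ℕ, then m¹ ∗ n¹ ≤_{lr↑} m² ∗ n², where ∗ denotes convolution of distributions on ℕ. -/
/-- `p` is a finitely supported probability distribution on ℕ. -/
def IsDist (p : ℕ → ℝ) : Prop :=
  (∀ x, 0 ≤ p x) ∧ (Function.support p).Finite ∧ ∑' x, p x = 1

/-- Upshifted likelihood-ratio order. -/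
def LRup (p q : ℕ → ℝ) : Prop :=
  ∀ i k l : ℕ, p (i + k + l) * q i ≤ p (i + l) * q (i + k)

/-- Convolution of distributions on ℕ. -/
def conv (p q : ℕ → ℝ) (x : ℕ) : ℝ :=
  ∑ y ∈ Finset.range (x + 1), p y * q (x - y)

/-!
Extend the distributions by zero to `ℤ`. Then `(m₁ ∗ n₁)(x) · (m₂ ∗ n₂)(y)` is the value at
`(x, y)` of the convolution on `ℤ × ℤ` of the joint weights `M (a, b) = m₁ a · m₂ b` and
`N (a, b) = n₁ a · n₂ b`, and both hypotheses become the same condition `LRup₂` on a joint weight;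
it remains to show that this convolution preserves `LRup₂`.

Split `N = S + A` with `S (a, b) = min (N (a, b)) (N (b, a))` symmetric and `A = N - S ≥ 0`, which
vanishes where `b ≤ a`. For `A` the inequality holds termwise after shifting the summation variable
by `(k, -k)`. For `S`, with `z = (i + l, i + k)` and `z' = (i + k + l, i)`, the involution
`τ (u, v) = (v + l, u - l)` exchanges the two sums to be compared, so twice their difference is
`∑ (M w - M (τ w)) (S (z - w) - S (z' - w))`, and in each term both factors have the same sign.
-/

open Function

/-- For `M (a, b) = p a * q b` this is `LRup p q`, read on `ℤ`. -/
def LRup₂ (M : ℤ × ℤ → ℝ) : Prop :=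
  ∀ i k l : ℤ, 0 ≤ k → 0 ≤ l → M (i + k + l, i) ≤ M (i + l, i + k)

noncomputable def conv₂ (M N : ℤ × ℤ → ℝ) (z : ℤ × ℤ) : ℝ :=
  ∑ᶠ w, M w * N (z - w)

lemma conv₂_add {M : ℤ × ℤ → ℝ} (hM : M.HasFiniteSupport) (N₁ N₂ : ℤ × ℤ → ℝ) :
    conv₂ M (N₁ + N₂) = conv₂ M N₁ + conv₂ M N₂ := by
  ext z
  simp only [conv₂, Pi.add_apply, mul_add]
  exact finsum_add_distrib (hM.mul_left _) (hM.mul_left _)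

namespace LRup₂

variable {M N : ℤ × ℤ → ℝ}

lemma le_of_shift (hM : LRup₂ M) {x y x' y' : ℤ} (hsum : x' + y' = x + y) (hx : x ≤ x')
    (hy' : y' ≤ x) : M (x', y') ≤ M (x, y) := by
  convert hM y' (x' - x) (x - y') (by omega) (by omega) using 2 <;> ext <;> simp <;> omega

lemma le_swap (hN : LRup₂ N) {a b : ℤ} (hba : b ≤ a) : N (a, b) ≤ N (b, a) :=
  hN.le_of_shift (by ring) hba le_rfl

lemma add (hM : LRup₂ M) (hN : LRup₂ N) : LRup₂ (M + N) :=
  fun i k l hk hl => add_le_add (hM i k l hk hl) (hN i k l hk hl)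

lemma min_swap (hN : LRup₂ N) : LRup₂ (fun w => min (N w) (N w.swap)) := by
  intro i k l hk hl
  refine le_min ((min_le_left _ _).trans (hN i k l hk hl)) ((min_le_left _ _).trans ?_)
  simpa only [Prod.swap_prod_mk, add_right_comm] using hN i l k hl hk

lemma conv₂_of_lower {A : ℤ × ℤ → ℝ} (hMf : M.HasFiniteSupport) (hM : LRup₂ M) (hA₀ : 0 ≤ A)
    (hA : ∀ a b, b ≤ a → A (a, b) = 0) : LRup₂ (conv₂ M A) := by
  intro i k l hk hl
  let τ := Equiv.addRight ((k, -k) : ℤ × ℤ)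
  calc conv₂ M A (i + k + l, i)
      = ∑ᶠ w, M (τ w) * A ((i + l, i + k) - w) := by
        rw [conv₂, ← finsum_comp_equiv τ]
        refine finsum_congr fun w => congrArg (M (τ w) * A ·) ?_
        ext <;> simp [τ] <;> ring
    _ ≤ conv₂ M A (i + l, i + k) := by
      refine finsum_le_finsum' ((hMf.comp_of_injective τ.injective).mul_left _) (hMf.mul_left _)
        fun ⟨u, v⟩ => ?_
      simp only [Prod.mk_sub_mk, τ, Equiv.coe_addRight, Prod.mk_add_mk]
      by_cases h : i + k - v ≤ i + l - u
      · simp [hA _ _ h]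
      · exact mul_le_mul_of_nonneg_right (hM.le_of_shift (by ring) (by omega) (by omega)) (hA₀ _)

lemma sub_mul_sub_nonneg_of_symm {S : ℤ × ℤ → ℝ} (hM : LRup₂ M) (hS : LRup₂ S)
    (hSsymm : ∀ w, S w.swap = S w) {i k l : ℤ} (hk : 0 ≤ k) (hl : 0 ≤ l) (u v : ℤ) :
    0 ≤ (M (u, v) - M (v + l, u - l)) * (S (i + l - u, i + k - v) - S (i + k + l - u, i - v)) := by
  rcases le_or_gt (v + l) u with h | h
  · refine mul_nonneg_of_nonpos_of_nonpos (sub_nonpos.2 ?_) (sub_nonpos.2 ?_)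
    · exact hM.le_of_shift (by ring) h (by omega)
    · rw [← hSsymm]
      exact hS.le_of_shift (by ring) (by omega) (by omega)
  · refine mul_nonneg (sub_nonneg.2 ?_) (sub_nonneg.2 ?_)
    · exact hM.le_of_shift (by ring) h.le (by omega)
    · exact hS.le_of_shift (by ring) (by omega) (by omega)

lemma conv₂_of_symm {S : ℤ × ℤ → ℝ} (hMf : M.HasFiniteSupport) (hM : LRup₂ M) (hS : LRup₂ S)
    (hSsymm : ∀ w, S w.swap = S w) : LRup₂ (conv₂ M S) := by
  intro i k l hk hl
  set z : ℤ × ℤ := (i + l, i + k)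
  set z' : ℤ × ℤ := (i + k + l, i)
  let τ : ℤ × ℤ ≃ ℤ × ℤ := (Equiv.prodComm ℤ ℤ).trans (Equiv.addRight (l, -l))
  have hτ : ∀ w, z - τ w = (z' - w).swap ∧ z' - τ w = (z - w).swap := by
    rintro ⟨u, v⟩
    simp only [z, z', τ, Equiv.trans_apply, Equiv.prodComm_apply, Prod.swap_prod_mk,
      Equiv.coe_addRight, Prod.mk_add_mk, Prod.mk_sub_mk, Prod.mk.injEq]
    omega
  let F w := M w * (S (z - w) - S (z' - w))
  have hF : F.HasFiniteSupport := hMf.mul_left _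
  have hFτ : (fun w => F (τ w)).HasFiniteSupport := hF.comp_of_injective τ.injective
  have hsum : 0 ≤ 2 * ∑ᶠ w, F w := by
    rw [two_mul]
    nth_rw 2 [← finsum_comp_equiv τ]
    rw [← finsum_add_distrib hF hFτ]
    refine finsum_nonneg fun ⟨u, v⟩ => ?_
    refine (sub_mul_sub_nonneg_of_symm (i := i) hM hS hSsymm hk hl u v).trans_eq ?_
    simp only [F, (hτ _).1, (hτ _).2, hSsymm]
    simp only [z, z', τ, Equiv.trans_apply, Equiv.prodComm_apply, Prod.swap_prod_mk,
      Equiv.coe_addRight, Prod.mk_add_mk, Prod.mk_sub_mk, ← sub_eq_add_neg]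
    ring
  rw [← sub_nonneg, conv₂, conv₂, ← finsum_sub_distrib]
  · simp only [← mul_sub]
    linarith
  · exact hMf.mul_left _
  · exact hMf.mul_left _

lemma conv₂ (hMf : M.HasFiniteSupport) (hM : LRup₂ M) (hN : LRup₂ N) : LRup₂ (conv₂ M N) := by
  set S : ℤ × ℤ → ℝ := fun w => min (N w) (N w.swap)
  have hNS : N = S + (N - S) := (add_sub_cancel _ _).symm
  rw [hNS, conv₂_add hMf]
  refine (conv₂_of_symm hMf hM hN.min_swap fun w => min_comm _ _).add
    (conv₂_of_lower hMf hM (fun w => sub_nonneg.2 (min_le_left _ _)) fun a b hba => ?_)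
  simp [S, min_eq_left (hN.le_swap hba)]

end LRup₂

lemma hasFiniteSupport_fst_mul_snd {α β R : Type*} [MulZeroClass R] {f : α → R} {g : β → R}
    (hf : f.HasFiniteSupport) (hg : g.HasFiniteSupport) :
    HasFiniteSupport fun w : α × β => f w.1 * g w.2 :=
  (hf.prod hg).subset fun _ hw => ⟨left_ne_zero_of_mul hw, right_ne_zero_of_mul hw⟩

lemma finsum_mul_finsum {α β R : Type*} [NonUnitalNonAssocSemiring R] {f : α → R} {g : β → R}
    (hf : f.HasFiniteSupport) (hg : g.HasFiniteSupport) :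
    (∑ᶠ a, f a) * ∑ᶠ b, g b = ∑ᶠ w : α × β, f w.1 * g w.2 := by
  rw [finsum_curry _ (hasFiniteSupport_fst_mul_snd hf hg), finsum_mul' _ _ hf]
  exact finsum_congr fun a => mul_finsum' _ _ hg

noncomputable def zeroExtend (p : ℕ → ℝ) : ℤ → ℝ :=
  extend ((↑) : ℕ → ℤ) p 0

lemma zeroExtend_natCast (p : ℕ → ℝ) (n : ℕ) : zeroExtend p n = p n :=
  Nat.cast_injective.extend_apply p 0 n

lemma zeroExtend_of_neg (p : ℕ → ℝ) {z : ℤ} (hz : z < 0) : zeroExtend p z = 0 :=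
  extend_apply' _ _ _ fun ⟨n, hn⟩ => by omega

lemma exists_natCast_of_zeroExtend_ne_zero {p : ℕ → ℝ} {z : ℤ} (hz : zeroExtend p z ≠ 0) :
    ∃ n : ℕ, (n : ℤ) = z ∧ p n ≠ 0 := by
  lift z to ℕ using not_lt.1 fun h => hz (zeroExtend_of_neg p h)
  exact ⟨z, rfl, by rwa [zeroExtend_natCast] at hz⟩

lemma zeroExtend_nonneg {p : ℕ → ℝ} (hp : ∀ n, 0 ≤ p n) (z : ℤ) : 0 ≤ zeroExtend p z := by
  rcases lt_or_ge z 0 with hz | hz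
  · exact (zeroExtend_of_neg p hz).ge
  · lift z to ℕ using hz
    exact (zeroExtend_natCast p z).symm ▸ hp z

lemma hasFiniteSupport_zeroExtend {p : ℕ → ℝ} (hp : p.HasFiniteSupport) :
    (zeroExtend p).HasFiniteSupport :=
  (hp.image _).subset fun _ hz =>
    let ⟨n, hn, hpn⟩ := exists_natCast_of_zeroExtend_ne_zero hz
    ⟨n, hpn, hn⟩

lemma LRup.lrup₂_zeroExtend {p q : ℕ → ℝ} (hp : ∀ n, 0 ≤ p n) (hq : ∀ n, 0 ≤ q n)
    (h : LRup p q) : LRup₂ fun w => zeroExtend p w.1 * zeroExtend q w.2 := by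
  intro i k l hk hl
  dsimp only
  rcases lt_or_ge i 0 with hi | hi
  · rw [zeroExtend_of_neg q hi, mul_zero]
    exact mul_nonneg (zeroExtend_nonneg hp _) (zeroExtend_nonneg hq _)
  · lift i to ℕ using hi
    lift k to ℕ using hk
    lift l to ℕ using hl
    simpa only [← Nat.cast_add, zeroExtend_natCast] using h i k l

lemma support_zeroExtend_mul_sub_subset (p q : ℕ → ℝ) (x : ℕ) :
    support (fun u : ℤ => zeroExtend p u * zeroExtend q (x - u)) ⊆
      ↑((Finset.range (x + 1)).map (Nat.castEmbedding : ℕ ↪ ℤ)) := by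
  intro u hu
  obtain ⟨n, rfl, -⟩ := exists_natCast_of_zeroExtend_ne_zero (left_ne_zero_of_mul hu)
  obtain ⟨m, hm, -⟩ := exists_natCast_of_zeroExtend_ne_zero (right_ne_zero_of_mul hu)
  simp only [Finset.coe_map, Finset.coe_range, Set.mem_image, Set.mem_Iio]
  exact ⟨n, by omega, rfl⟩

lemma conv_eq_finsum (p q : ℕ → ℝ) (x : ℕ) :
    conv p q x = ∑ᶠ u : ℤ, zeroExtend p u * zeroExtend q (x - u) := by
  rw [finsum_eq_sum_of_support_subset _ (support_zeroExtend_mul_sub_subset p q x), Finset.sum_map,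
    conv]
  refine Finset.sum_congr rfl fun n hn => ?_
  rw [Finset.mem_range] at hn
  rw [Nat.castEmbedding_apply, ← Nat.cast_sub (by omega), zeroExtend_natCast, zeroExtend_natCast]

lemma conv_mul_conv (p q p' q' : ℕ → ℝ) (x y : ℕ) :
    conv p q x * conv p' q' y =
      conv₂ (fun w => zeroExtend p w.1 * zeroExtend p' w.2)
        (fun w => zeroExtend q w.1 * zeroExtend q' w.2) (x, y) := by
  rw [conv_eq_finsum, conv_eq_finsum, finsum_mul_finsum, conv₂]
  · exact finsum_congr fun w => by simp only [Prod.fst_sub, Prod.snd_sub]; ring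
  · exact (Finset.finite_toSet _).subset (support_zeroExtend_mul_sub_subset p q x)
  · exact (Finset.finite_toSet _).subset (support_zeroExtend_mul_sub_subset p' q' y)

theorem lru_conv (m₁ m₂ n₁ n₂ : ℕ → ℝ)
    (hm₁ : IsDist m₁) (hm₂ : IsDist m₂) (hn₁ : IsDist n₁) (hn₂ : IsDist n₂)
    (hm : LRup m₁ m₂) (hn : LRup n₁ n₂) :
    LRup (conv m₁ n₁) (conv m₂ n₂) := by
  intro i k l
  have hM := hm.lrup₂_zeroExtend hm₁.1 hm₂.1
  have hMf := hasFiniteSupport_fst_mul_snd (hasFiniteSupport_zeroExtend hm₁.2.1)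
    (hasFiniteSupport_zeroExtend hm₂.2.1)
  simpa only [conv_mul_conv, Nat.cast_add] using
    hM.conv₂ hMf (hn.lrup₂_zeroExtend hn₁.1 hn₂.1) i k l (Nat.cast_nonneg k) (Nat.cast_nonneg l)
end

section
/- The truncated-mean operator D is monotone for the upshifted likelihood-ratio order: fix b ∈ ℕ and a finite index set; for collections m of finitely supported probability distributions on ℕ with 0 in their supports, define D[m] = Σ_{|x| ≤ b} |x|·Π_i m_i(x_i) / Σ_{|x| ≤ b} Π_i m_i(x_i). If m¹_i ≤_{lr↑} m²_i for all i, then D[m¹] ≤ D[m²]. -/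
/-- The truncated-mean operator with vertex capacity `b`. -/
noncomputable def Dop {ι : Type*} [Fintype ι] (b : ℕ) (m : ι → ℕ → ℝ) : ℝ :=
  (∑' x : ι → ℕ, if (∑ i, x i) ≤ b then ((∑ i, x i : ℕ) : ℝ) * ∏ i, m i (x i) else 0) /
    (∑' x : ι → ℕ, if (∑ i, x i) ≤ b then ∏ i, m i (x i) else 0)

/-
Let `u_j(n)` be the total weight `∑_{|x| = n} ∏_i m_j i (x i)` for `n ≤ b`: it is the `n`-th
coefficient of `∏_i` (truncation of `m_j i` to degrees `≤ b`), and `Dop b m_j` is the mean of `u_j`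
on `[0, b]`. Truncation preserves `≤_{lr↑}` and so does convolution, hence `u₁ ≤_{lr↑} u₂`; in
particular `u₁ ≤_lr u₂`, which forces the means to be ordered.

For convolution, writing both sides of the `lr↑` inequality for `(p * P, q * Q)` as double sums
over `a` and `s` (the sum of the indices of `p` and `q`) reduces it to
`∑_a f a * g a ≤ ∑_a f a * g (a + k)` for each `s`, where `f a = p a * q (s - a)` and
`g a = P (M - a) * Q (a + i - s)`. The `lr↑` hypotheses say precisely that `f` grows from `a`
towards `s - a` and `g` grows from `a` towards `c - a` with `c = s + k + l ≥ s + k`. A layer-cake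
decomposition of `f` and then of `g` reduces this to indicator functions, i.e. to a counting
inequality for sets that is proved by an explicit injection.
-/

open Finset Polynomial

theorem sum_mul_nonneg_of_sum_superlevel_nonneg {α : Type*} (A : Finset α) (f w : α → ℝ)
    (hf : ∀ x ∈ A, 0 ≤ f x) (hw : ∀ t, 0 < t → 0 ≤ ∑ x ∈ A with t ≤ f x, w x) :
    0 ≤ ∑ x ∈ A, f x * w x := by
  classical
  induction hn : #{x ∈ A | 0 < f x} using Nat.strong_induction_on generalizing f with
  | _ n ih =>
  have eq_zero_of_lt_pos : ∀ x ∈ A, (∀ y ∈ A, 0 < f y → f x < f y) → f x = 0 := fun x hx h =>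
    (hf x hx).antisymm' (not_lt.1 fun hpos => (h x hx hpos).false)
  obtain hS | ⟨x₀, hx₀, hmin⟩ := ({x ∈ A | 0 < f x}).eq_empty_or_nonempty.imp id
    fun hne => exists_min_image _ f hne
  · have hzero : ∀ x ∈ A, f x = 0 := fun x hx => eq_zero_of_lt_pos x hx fun y hy hpos =>
      (eq_empty_iff_forall_notMem.1 hS y (mem_filter.2 ⟨hy, hpos⟩)).elim
    rw [sum_eq_zero fun x hx => by rw [hzero x hx, zero_mul]]
  obtain ⟨hx₀A, hμ⟩ := mem_filter.1 hx₀
  set μ := f x₀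
  -- peel off the bottom layer `μ • 𝟙{0 < f}`
  set f' := fun x => max (f x - μ) 0
  have hsplit : ∀ x ∈ A, f x * w x = f' x * w x + μ * if μ ≤ f x then w x else 0 := by
    intro x hx
    by_cases h : μ ≤ f x
    · simp only [f', h, if_true, max_eq_left (sub_nonneg.2 h)]; ring
    · have : f x = 0 := eq_zero_of_lt_pos x hx fun y hy hpos =>
        (not_le.1 h).trans_le (hmin y (mem_filter.2 ⟨hy, hpos⟩))
      rw [if_neg h]; simp [f', this, hμ.le]
  have hsuper : ∀ t, 0 < t → ∀ x, t ≤ f' x ↔ t + μ ≤ f x := fun t ht x => by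
    simp only [f', le_max_iff, not_le.2 ht, or_false, le_sub_iff_add_le]
  have hcard : #{x ∈ A | 0 < f' x} < n := by
    refine hn ▸ card_lt_card ((ssubset_iff_of_subset fun x hx => ?_).2 ⟨x₀, hx₀, ?_⟩)
    · obtain ⟨hxA, hx⟩ := mem_filter.1 hx
      exact mem_filter.2 ⟨hxA, by simp only [f', lt_max_iff, lt_irrefl, or_false] at hx; linarith⟩
    · simp [f', μ]
  have ih' := ih _ hcard f' (fun x _ => le_max_right _ _)
    (fun t ht => by simpa only [hsuper t ht] using hw (t + μ) (by linarith)) rfl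
  rw [sum_congr rfl hsplit, sum_add_distrib, ← mul_sum, ← sum_filter]
  exact add_nonneg ih' (mul_nonneg hμ.le (hw μ hμ))

theorem sum_le_sum_of_card_superlevel_le {α : Type*} [DecidableEq α] (A B : Finset α)
    (g : α → ℝ) (hg : ∀ x, 0 ≤ g x)
    (h : ∀ t, 0 < t → #{x ∈ A | t ≤ g x} ≤ #{x ∈ B | t ≤ g x}) :
    ∑ x ∈ A, g x ≤ ∑ x ∈ B, g x := by
  have key := sum_mul_nonneg_of_sum_superlevel_nonneg (A ∪ B) g
    (fun x => (if x ∈ B then 1 else 0) - if x ∈ A then 1 else 0) (fun x _ => hg x) fun t ht => by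
      simp only [sum_sub_distrib, sum_boole, filter_filter, sub_nonneg]
      have hfilter : ∀ C, C ⊆ A ∪ B → {x ∈ A ∪ B | t ≤ g x ∧ x ∈ C} = {x ∈ C | t ≤ g x} :=
        fun C hC => by ext x; simpa [and_comm] using fun _ hx => mem_union.1 (hC hx)
      rw [hfilter A subset_union_left, hfilter B subset_union_right]
      exact_mod_cast h t ht
  simpa [mul_sub, sum_sub_distrib, sum_ite_mem, union_inter_cancel_left,
    union_inter_cancel_right] using key

section CenteredShift

/- A finset `T` as in `hT` is a union of intervals `[s - x, x]` centred at `s / 2`, and a set as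
in `hP` is a union of intervals `[x, c - x]` centred at `c / 2`; since `s + k ≤ c`, shifting by
`k` moves `T` towards `c / 2`. -/

variable {s c k : ℤ} {T : Finset ℤ}

theorem card_filter_le_card_filter_add_of_symmetric (hk : 0 ≤ k) (hsc : s + k ≤ c)
    (hT : ∀ x ∈ T, ∀ y, s - x ≤ y → y ≤ x → y ∈ T) (J : ℤ → Prop) [DecidablePred J]
    (hJsymm : ∀ x, J x → J (c - x)) (hJ : ∀ x, J x → ∀ y, x ≤ y → y ≤ c - x → J y) :
    #{x ∈ T | J x} ≤ #{x ∈ T | J (x + k)} := by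
  have hreflect : ∀ x, J x → ¬J (x + k) → c - k ≤ 2 * x := fun x hx hxk => by
    by_contra! h
    exact hxk (hJ x hx _ (by omega) (by omega))
  -- `x ↦ c - k - x` swaps `J` and `J - k`
  refine card_le_card_of_injOn (fun x => if J (x + k) then x else c - k - x) ?_ ?_
  · intro x hx
    simp only [mem_coe, mem_filter] at hx ⊢
    split_ifs with hxk
    · exact ⟨hx.1, hxk⟩
    · have := hreflect x hx.2 hxk
      refine ⟨hT x hx.1 _ (by omega) (by omega), ?_⟩
      rw [sub_right_comm, sub_add_cancel]
      exact hJsymm x hx.2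
  · intro x hx y hy hxy
    simp only [mem_coe, mem_filter] at hx hy
    have hneg : ∀ x y, J x → ¬J (y + k) → x ≠ c - k - y := fun x y hx hy hxy => by
      have := hJsymm x hx
      rw [hxy, show c - (c - k - y) = y + k by ring] at this
      exact hy this
    dsimp only at hxy
    split_ifs at hxy with hxk hyk hyk
    · exact hxy
    · exact absurd hxy (hneg x y hx.2 hyk)
    · exact absurd hxy.symm (hneg y x hy.2 hxk)
    · omega

theorem card_filter_le_card_filter_add_of_le_two_mul (hk : 0 ≤ k)
    (hT : ∀ x ∈ T, ∀ y, s - x ≤ y → y ≤ x → y ∈ T) (G : ℤ → Prop) [DecidablePred G]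
    (hG : ∀ x, G x → s + k ≤ 2 * x) :
    #{x ∈ T | G x} ≤ #{x ∈ T | G (x + k)} := by
  refine card_le_card_of_injOn (· - k) (fun x hx => ?_) (fun x _ y _ h => by simpa using h)
  simp only [mem_coe, mem_filter] at hx ⊢
  have := hG x hx.2
  exact ⟨hT x hx.1 _ (by omega) (by omega), by simpa using hx.2⟩

theorem card_filter_le_card_filter_add_of_centered (hk : 0 ≤ k) (hsc : s + k ≤ c)
    (hT : ∀ x ∈ T, ∀ y, s - x ≤ y → y ≤ x → y ∈ T) (P : ℤ → Prop) [DecidablePred P]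
    (hP : ∀ x, P x → ∀ y, x ≤ y → y ≤ c - x → P y) :
    #{x ∈ T | P x} ≤ #{x ∈ T | P (x + k)} := by
  have hsplit : ∀ Q R : ℤ → Prop, [DecidablePred Q] → [DecidablePred R] →
      #{x ∈ T | Q x} = #{x ∈ T | Q x ∧ R x} + #{x ∈ T | Q x ∧ ¬R x} := by
    intro Q R _ _
    rw [← card_filter_add_card_filter_not (s := {x ∈ T | Q x}) R, filter_filter, filter_filter]
  rw [hsplit P (P <| c - ·), hsplit (P <| · + k) (fun x => P (c - (x + k)))]
  refine add_le_add ?_ ?_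
  · refine card_filter_le_card_filter_add_of_symmetric hk hsc hT (fun x => P x ∧ P (c - x))
      (fun x hx => ⟨hx.2, by simpa using hx.1⟩) fun x hx y hxy hyx => ⟨hP x hx.1 y hxy hyx, ?_⟩
    exact hP x hx.1 _ (by omega) (by omega)
  · refine card_filter_le_card_filter_add_of_le_two_mul hk hT (fun x => P x ∧ ¬P (c - x))
      fun x hx => ?_
    by_contra! h
    exact hx.2 (hP x hx.1 _ (by omega) le_rfl)

theorem sum_le_sum_add_of_centered (hk : 0 ≤ k) (hsc : s + k ≤ c)
    (hT : ∀ x ∈ T, ∀ y, s - x ≤ y → y ≤ x → y ∈ T) (g : ℤ → ℝ) (hg0 : ∀ x, 0 ≤ g x)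
    (hg : ∀ x y, x ≤ y → y ≤ c - x → g x ≤ g y) :
    ∑ x ∈ T, g x ≤ ∑ x ∈ T, g (x + k) := by
  refine (sum_le_sum_of_card_superlevel_le T (T.map (addRightEmbedding k)) g hg0
    fun t _ => ?_).trans_eq (sum_map _ _ _)
  rw [filter_map, card_map]
  exact card_filter_le_card_filter_add_of_centered hk hsc hT (t ≤ g ·) fun x hx y hxy hyx =>
    hx.trans (hg x y hxy hyx)

theorem sum_mul_le_sum_mul_add_of_centered (hk : 0 ≤ k) (hsc : s + k ≤ c) (A : Finset ℤ)
    (f g : ℤ → ℝ)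
    (hfA : ∀ x ∉ A, f x = 0) (hf0 : ∀ x, 0 ≤ f x) (hf : ∀ x y, s - x ≤ y → y ≤ x → f x ≤ f y)
    (hg0 : ∀ x, 0 ≤ g x) (hg : ∀ x y, x ≤ y → y ≤ c - x → g x ≤ g y) :
    ∑ x ∈ A, f x * g x ≤ ∑ x ∈ A, f x * g (x + k) := by
  rw [← sub_nonneg, ← sum_sub_distrib]
  simp_rw [← mul_sub]
  refine sum_mul_nonneg_of_sum_superlevel_nonneg A f _ (fun x _ => hf0 x) fun t ht => ?_
  rw [sum_sub_distrib, sub_nonneg]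
  refine sum_le_sum_add_of_centered hk hsc (fun x hx y hxy hyx => ?_) g hg0 hg
  obtain ⟨hxA, hxt⟩ := mem_filter.1 hx
  have hy : t ≤ f y := hxt.trans (hf x y hxy hyx)
  exact mem_filter.2 ⟨by_contra fun hyA => by linarith [hfA y hyA], hy⟩

end CenteredShift

def intExtend {R : Type*} [Zero R] (p : ℕ → R) (z : ℤ) : R := if 0 ≤ z then p z.toNat else 0

@[simp] theorem intExtend_natCast {R : Type*} [Zero R] (p : ℕ → R) (n : ℕ) :
    intExtend p n = p n := by
  simp [intExtend]

theorem intExtend_of_neg {R : Type*} [Zero R] (p : ℕ → R) {z : ℤ} (hz : z < 0) :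
    intExtend p z = 0 :=
  if_neg hz.not_ge

theorem intExtend_nonneg {p : ℕ → ℝ} (hp : ∀ n, 0 ≤ p n) (z : ℤ) : 0 ≤ intExtend p z := by
  unfold intExtend; split_ifs <;> simp [hp]

theorem LRup.intExtend_mul_le {p q : ℕ → ℝ} (hpq : LRup p q) (hp : ∀ n, 0 ≤ p n)
    (hq : ∀ n, 0 ≤ q n) {x y d : ℤ} (hd : 0 ≤ d) (hyx : y + d ≤ x) :
    intExtend p x * intExtend q y ≤ intExtend p (x - d) * intExtend q (y + d) := by
  -- this is `hpq` with `i = y`, `k = d`, `l = x - y - d`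
  rcases lt_or_ge y 0 with hy | hy
  · rw [intExtend_of_neg q hy, mul_zero]
    exact mul_nonneg (intExtend_nonneg hp _) (intExtend_nonneg hq _)
  lift y to ℕ using hy
  lift d to ℕ using hd
  obtain ⟨l, rfl⟩ : ∃ l : ℕ, x = y + d + l := ⟨(x - y - d).toNat, by omega⟩
  rw [show (y + d + l - d : ℤ) = (y + l : ℕ) by push_cast; ring]
  simpa only [← Nat.cast_add, intExtend_natCast] using hpq y d l

theorem sum_antidiagonal_eq_sum_intExtend (p P : ℕ → ℝ) (n : ℕ) (a : ℤ) {S : Finset ℤ}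
    (hS : Icc a (a + n) ⊆ S) :
    ∑ x ∈ antidiagonal n, p x.1 * P x.2 =
      ∑ s ∈ S, intExtend p (s - a) * intExtend P (a + n - s) := by
  rw [Nat.sum_antidiagonal_eq_sum_range_succ_mk, ← sum_subset hS fun s _ hs => ?_]
  · refine sum_nbij' (a + ·) (fun s => (s - a).toNat) (fun j hj => ?_) (fun s hs => ?_)
      (fun j _ => by simp) (fun s hs => ?_) (fun j hj => ?_)
    · simp only [mem_range, mem_Icc] at hj ⊢; omega
    · simp only [mem_range, mem_Icc] at hs ⊢; omega
    · simp only [mem_Icc] at hs; omega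
    · simp only [mem_range] at hj
      simp [show (a + n - (a + j) : ℤ) = (n - j : ℕ) by omega]
  · rw [mem_Icc, not_and_or, not_le, not_le] at hs
    rcases hs with hs | hs
    · rw [intExtend_of_neg p (by omega), zero_mul]
    · rw [intExtend_of_neg P (by omega), mul_zero]

theorem sum_antidiagonal_mul_sum_antidiagonal (p q P Q : ℕ → ℝ) {n₁ n₂ N : ℕ} (h₁ : n₁ ≤ N)
    (h₂ : n₂ ≤ N) :
    (∑ x ∈ antidiagonal n₁, p x.1 * P x.2) * (∑ x ∈ antidiagonal n₂, q x.1 * Q x.2) =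
      ∑ s ∈ Icc (0 : ℤ) (2 * N), ∑ a ∈ Icc (0 : ℤ) (2 * N),
        (intExtend p a * intExtend q (s - a)) *
          (intExtend P (n₁ - a) * intExtend Q (a + n₂ - s)) := by
  rw [sum_antidiagonal_eq_sum_intExtend p P n₁ 0 (S := Icc 0 (2 * N))
    (Icc_subset_Icc le_rfl (by omega)), sum_mul, sum_comm]
  refine sum_congr rfl fun a ha => ?_
  rcases le_or_gt a N with haN | haN
  · rw [mem_Icc] at ha
    rw [sum_antidiagonal_eq_sum_intExtend q Q n₂ a (S := Icc 0 (2 * N))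
      (Icc_subset_Icc ha.1 (by omega)), mul_sum]
    refine sum_congr rfl fun s _ => ?_
    simp only [sub_zero, zero_add]
    ring
  · simp [intExtend_of_neg P (show (n₁ : ℤ) - a < 0 by omega)]

theorem LRup.sum_antidiagonal {p q P Q : ℕ → ℝ} (hp : ∀ n, 0 ≤ p n) (hq : ∀ n, 0 ≤ q n)
    (hP : ∀ n, 0 ≤ P n) (hQ : ∀ n, 0 ≤ Q n) (hpq : LRup p q) (hPQ : LRup P Q) :
    LRup (fun n => ∑ x ∈ antidiagonal n, p x.1 * P x.2)
      (fun n => ∑ x ∈ antidiagonal n, q x.1 * Q x.2) := by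
  intro i k l
  set N := i + k + l
  rw [sum_antidiagonal_mul_sum_antidiagonal p q P Q le_rfl (show i ≤ N by omega),
    sum_antidiagonal_mul_sum_antidiagonal p q P Q (show i + l ≤ N by omega)
      (show i + k ≤ N by omega)]
  refine sum_le_sum fun s hs => ?_
  rw [mem_Icc] at hs
  have key := sum_mul_le_sum_mul_add_of_centered (s := s) (c := s + k + l) (k := k) (by positivity)
    (by omega) (Icc (0 : ℤ) (2 * N)) (fun a => intExtend p a * intExtend q (s - a))
    (fun a => intExtend P (N - a) * intExtend Q (a + i - s)) ?_
    (fun a => mul_nonneg (intExtend_nonneg hp _) (intExtend_nonneg hq _)) ?_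
    (fun a => mul_nonneg (intExtend_nonneg hP _) (intExtend_nonneg hQ _)) ?_
  · refine key.trans_eq (sum_congr rfl fun a _ => ?_)
    rw [show (N : ℤ) - (a + k) = (i + l : ℕ) - a by push_cast [N]; ring,
      show a + k + i - s = a + (i + k : ℕ) - s by push_cast; ring]
  · intro a ha
    rw [mem_Icc, not_and_or, not_le, not_le] at ha
    rcases ha with ha | ha
    · rw [intExtend_of_neg p ha, zero_mul]
    · rw [intExtend_of_neg q (by omega), mul_zero]
  · intro x y hxy hyx
    convert hpq.intExtend_mul_le hp hq (x := x) (y := s - x) (d := x - y) (by omega) (by omega)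
      using 3 <;> ring
  · intro x y hxy hyx
    convert hPQ.intExtend_mul_le hP hQ (x := N - x) (y := x + i - s) (d := y - x) (by omega)
      (by push_cast [N] at hyx ⊢; omega) using 3 <;> ring

theorem sum_mul_sum_le_of_likelihoodRatio (s : Finset ℕ) (u v : ℕ → ℝ)
    (h : ∀ m ∈ s, ∀ n ∈ s, m ≤ n → u n * v m ≤ u m * v n) :
    (∑ n ∈ s, n * u n) * ∑ n ∈ s, v n ≤ (∑ n ∈ s, n * v n) * ∑ n ∈ s, u n := by
  set D := ∑ n ∈ s, ∑ m ∈ s, (n : ℝ) * (v n * u m - u n * v m)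
  have hD : (∑ n ∈ s, n * v n) * ∑ n ∈ s, u n - (∑ n ∈ s, n * u n) * ∑ n ∈ s, v n = D := by
    simp only [D, sum_mul_sum, ← sum_sub_distrib, mul_sub, mul_assoc]
  have hswap : D = ∑ n ∈ s, ∑ m ∈ s, -((m : ℝ) * (v n * u m - u n * v m)) := by
    rw [sum_comm]
    exact sum_congr rfl fun _ _ => sum_congr rfl fun _ _ => by ring
  have hterm : ∀ n ∈ s, ∀ m ∈ s, 0 ≤ ((n : ℝ) - m) * (v n * u m - u n * v m) := by
    intro n hn m hm
    rcases le_total m n with hmn | hnm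
    · exact mul_nonneg (sub_nonneg.2 (by exact_mod_cast hmn))
        (sub_nonneg.2 (by linarith [h m hm n hn hmn]))
    · exact mul_nonneg_of_nonpos_of_nonpos (sub_nonpos.2 (by exact_mod_cast hnm))
        (sub_nonpos.2 (by linarith [h n hn m hm hnm]))
  have h2D : 2 * D = ∑ n ∈ s, ∑ m ∈ s, ((n : ℝ) - m) * (v n * u m - u n * v m) := by
    rw [two_mul]
    nth_rewrite 2 [hswap]
    simp only [D, ← sum_add_distrib]
    exact sum_congr rfl fun _ _ => sum_congr rfl fun _ _ => by ring
  linarith [sum_nonneg fun n hn => sum_nonneg fun m hm => hterm n hn m hm]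

theorem LRup.likelihoodRatio {p q : ℕ → ℝ} (h : LRup p q) {m n : ℕ} (hmn : m ≤ n) :
    p n * q m ≤ p m * q n := by
  obtain ⟨k, rfl⟩ := Nat.exists_eq_add_of_le hmn
  simpa using h m k 0

theorem LRup.coeff_mul {P₁ P₂ Q₁ Q₂ : ℝ[X]} (hP₁ : ∀ n, 0 ≤ P₁.coeff n)
    (hP₂ : ∀ n, 0 ≤ P₂.coeff n) (hQ₁ : ∀ n, 0 ≤ Q₁.coeff n) (hQ₂ : ∀ n, 0 ≤ Q₂.coeff n)
    (h₁ : LRup P₁.coeff Q₁.coeff) (h₂ : LRup P₂.coeff Q₂.coeff) :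
    LRup (P₁ * P₂).coeff (Q₁ * Q₂).coeff := by
  rw [show (P₁ * P₂).coeff = _ from funext (Polynomial.coeff_mul P₁ P₂),
    show (Q₁ * Q₂).coeff = _ from funext (Polynomial.coeff_mul Q₁ Q₂)]
  exact LRup.sum_antidiagonal hP₁ hQ₁ hP₂ hQ₂ h₁ h₂

theorem coeff_prod_nonneg {ι : Type*} (s : Finset ι) (P : ι → ℝ[X])
    (h : ∀ i ∈ s, ∀ n, 0 ≤ (P i).coeff n) (n : ℕ) : 0 ≤ (∏ i ∈ s, P i).coeff n := by
  induction s using Finset.cons_induction generalizing n with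
  | empty => rw [prod_empty, coeff_one]; split_ifs <;> norm_num
  | cons a s ha ih =>
    rw [prod_cons, coeff_mul]
    exact sum_nonneg fun x _ => mul_nonneg (h a (mem_cons_self a s) _)
      (ih (fun i hi => h i (mem_cons_of_mem hi)) _)

theorem LRup.coeff_prod {ι : Type*} (s : Finset ι) (P Q : ι → ℝ[X])
    (hP : ∀ i ∈ s, ∀ n, 0 ≤ (P i).coeff n) (hQ : ∀ i ∈ s, ∀ n, 0 ≤ (Q i).coeff n)
    (h : ∀ i ∈ s, LRup (P i).coeff (Q i).coeff) :
    LRup (∏ i ∈ s, P i).coeff (∏ i ∈ s, Q i).coeff := by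
  induction s using Finset.cons_induction with
  | empty =>
    intro i k l
    simp only [prod_empty, coeff_one]
    split_ifs <;> first | omega | norm_num
  | cons a s ha ih =>
    simp only [mem_cons, forall_eq_or_imp] at hP hQ h
    rw [prod_cons, prod_cons]
    exact LRup.coeff_mul hP.1 (coeff_prod_nonneg s P hP.2) hQ.1 (coeff_prod_nonneg s Q hQ.2) h.1
      (ih hP.2 hQ.2 h.2)

noncomputable def truncPoly {R : Type*} [Semiring R] (f : ℕ → R) (b : ℕ) : R[X] :=
  ∑ j ∈ range (b + 1), C (f j) * X ^ j

theorem truncPoly_coeff {R : Type*} [Semiring R] (f : ℕ → R) (b n : ℕ) :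
    (truncPoly f b).coeff n = if n ≤ b then f n else 0 := by
  simp [truncPoly]

theorem truncPoly_coeff_nonneg {f : ℕ → ℝ} (hf : ∀ n, 0 ≤ f n) (b n : ℕ) :
    0 ≤ (truncPoly f b).coeff n := by
  rw [truncPoly_coeff]; split_ifs <;> simp [hf]

theorem LRup.truncPoly {p q : ℕ → ℝ} (h : LRup p q) (hp : ∀ n, 0 ≤ p n) (hq : ∀ n, 0 ≤ q n)
    (b : ℕ) : LRup (truncPoly p b).coeff (truncPoly q b).coeff := by
  intro i k l
  by_cases hb : i + k + l ≤ b
  · simp only [truncPoly_coeff, if_pos hb, if_pos (show i ≤ b by omega),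
      if_pos (show i + l ≤ b by omega), if_pos (show i + k ≤ b by omega)]
    exact h i k l
  · rw [truncPoly_coeff, if_neg hb, zero_mul]
    exact mul_nonneg (truncPoly_coeff_nonneg hp b _) (truncPoly_coeff_nonneg hq b _)

theorem coeff_prod_truncPoly {ι : Type*} [Fintype ι] [DecidableEq ι] (m : ι → ℕ → ℝ) (b n : ℕ) :
    (∏ i, truncPoly (m i) b).coeff n =
      ∑ x ∈ Fintype.piFinset (fun _ => range (b + 1)) with ∑ i, x i = n, ∏ i, m i (x i) := by
  simp only [truncPoly, prod_univ_sum, prod_mul_distrib, ← map_prod, prod_pow_eq_pow_sum,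
    finsetSum_coeff, coeff_C_mul_X_pow, sum_filter, eq_comm]

theorem tsum_ite_sum_le_eq_sum_coeff {ι : Type*} [Fintype ι] (m : ι → ℕ → ℝ) (b : ℕ) (W : ℕ → ℝ) :
    ∑' x : ι → ℕ, (if ∑ i, x i ≤ b then W (∑ i, x i) * ∏ i, m i (x i) else 0) =
      ∑ n ∈ range (b + 1), W n * (∏ i, truncPoly (m i) b).coeff n := by
  classical
  rw [tsum_eq_sum (s := Fintype.piFinset fun _ => range (b + 1)) fun x hx => ?_]
  · rw [← sum_filter, ← sum_fiberwise_of_maps_to (g := fun x : ι → ℕ => ∑ i, x i)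
      (t := range (b + 1)) fun x hx => mem_range_succ_iff.2 (mem_filter.1 hx).2]
    refine sum_congr rfl fun n hn => ?_
    rw [coeff_prod_truncPoly, mul_sum, filter_filter]
    refine sum_congr (filter_congr fun x _ => ?_) fun x hx => by rw [(mem_filter.1 hx).2]
    exact and_iff_right_of_imp fun hx => hx ▸ mem_range_succ_iff.1 hn
  · rw [if_neg]
    contrapose! hx
    exact Fintype.mem_piFinset.2 fun i =>
      mem_range_succ_iff.2 ((single_le_sum (fun j _ => Nat.zero_le (x j)) (mem_univ i)).trans hx)

theorem Dop_eq_div {ι : Type*} [Fintype ι] (b : ℕ) (m : ι → ℕ → ℝ) :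
    Dop b m = (∑ n ∈ range (b + 1), n * (∏ i, truncPoly (m i) b).coeff n) /
      ∑ n ∈ range (b + 1), (∏ i, truncPoly (m i) b).coeff n := by
  rw [Dop, tsum_ite_sum_le_eq_sum_coeff m b (fun n => (n : ℝ))]
  simpa using congrArg (_ / ·) (tsum_ite_sum_le_eq_sum_coeff m b 1)

theorem sum_coeff_prod_truncPoly_pos {ι : Type*} [Fintype ι] {m : ι → ℕ → ℝ}
    (hm : ∀ i n, 0 ≤ m i n) (hm0 : ∀ i, 0 < m i 0) (b : ℕ) :
    0 < ∑ n ∈ range (b + 1), (∏ i, truncPoly (m i) b).coeff n := by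
  have h0 : 0 < (∏ i, truncPoly (m i) b).coeff 0 := by
    rw [coeff_zero_prod]
    exact prod_pos fun i _ => by simpa [truncPoly_coeff] using hm0 i
  exact h0.trans_le (single_le_sum (fun n _ => coeff_prod_nonneg _ _
    (fun i _ => truncPoly_coeff_nonneg (hm i) b) n) (by simp))

theorem Dop_monotone {ι : Type*} [Fintype ι] (b : ℕ) (m₁ m₂ : ι → ℕ → ℝ)
    (h₁ : ∀ i, IsDist (m₁ i)) (h₂ : ∀ i, IsDist (m₂ i))
    (h₁0 : ∀ i, 0 < m₁ i 0) (h₂0 : ∀ i, 0 < m₂ i 0)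
    (h : ∀ i, LRup (m₁ i) (m₂ i)) :
    Dop b m₁ ≤ Dop b m₂ := by
  have hm₁ : ∀ i n, 0 ≤ m₁ i n := fun i => (h₁ i).1
  have hm₂ : ∀ i n, 0 ≤ m₂ i n := fun i => (h₂ i).1
  have hLR : LRup (∏ i, truncPoly (m₁ i) b).coeff (∏ i, truncPoly (m₂ i) b).coeff :=
    LRup.coeff_prod _ _ _ (fun i _ => truncPoly_coeff_nonneg (hm₁ i) b)
      (fun i _ => truncPoly_coeff_nonneg (hm₂ i) b) fun i _ => (h i).truncPoly (hm₁ i) (hm₂ i) b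
  rw [Dop_eq_div, Dop_eq_div, div_le_div_iff₀ (sum_coeff_prod_truncPoly_pos hm₁ h₁0 b)
    (sum_coeff_prod_truncPoly_pos hm₂ h₂0 b)]
  exact sum_mul_sum_le_of_likelihoodRatio _ _ _ fun m _ n _ hmn => hLR.likelihoodRatio hmn
end
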